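/- Let G be a well-matched VPG and suppose a nonterminal L admits a derivation L →* s1 L s2 with s2 nonempty (terminal strings s1, s2). Then some step of this derivation uses a matching rule L1 → ‹a A b› B; consequently the derivation can be refactored as L →* s1' ‹a s1'' L s2'' b› B' s2' where ‹a occurs in the pumped left part and b› in the pumped right part. -/
import Mathlib


namespace VStar

inductive Kind : Type
  | plain | call | ret
deriving DecidableEq

variable {α : Type}

/-- Well-matched strings with respect to a tagging. -/
inductive WellMatched (t : α → Kind) : List α → Prop
  | nil : WellMatched t []
  | plain {c : α} {s : List α} : t c = Kind.plain → WellMatched t s →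
      WellMatched t (c :: s)
  | nest {a b : α} {s1 s2 : List α} : t a = Kind.call → t b = Kind.ret →
      WellMatched t s1 → WellMatched t s2 →
      WellMatched t (a :: s1 ++ b :: s2)

/-- Well-matched visibly pushdown grammars. -/
structure VPG (α N : Type) (t : α → Kind) where
  start : N
  peps : N → Prop
  pplain : N → α → N → Prop
  pmatch : N → α → N → α → N → Prop
  plain_ok : ∀ {L c L1}, pplain L c L1 → t c = Kind.plain
  match_ok : ∀ {L a L1 b L2}, pmatch L a L1 b L2 → t a = Kind.call ∧ t b = Kind.ret

inductive VPG.Derives {α N : Type} {t : α → Kind} (G : VPG α N t) : N → List α → Prop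
  | eps {L} : G.peps L → G.Derives L []
  | plain {L c L1 s} : G.pplain L c L1 → G.Derives L1 s → G.Derives L (c :: s)
  | nest {L a L1 b L2 s1 s2} : G.pmatch L a L1 b L2 →
      G.Derives L1 s1 → G.Derives L2 s2 → G.Derives L (a :: s1 ++ b :: s2)

def VPG.lang {α N : Type} {t : α → Kind} (G : VPG α N t) : Set (List α) :=
  {s | G.Derives G.start s}

/-- A language is a visibly pushdown language (for tagging `t`). -/
def IsVPL (t : α → Kind) (L : Set (List α)) : Prop :=
  ∃ (n : ℕ) (G : VPG α (Fin n) t), L = G.lang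

/-- `lpow x k` is the concatenation of `k` copies of `x`. -/
def lpow (x : List α) (k : ℕ) : List α := (List.replicate k x).flatten

/-- A nesting pattern of `s = u ++ x ++ z ++ y ++ v` with respect to language `L`. -/
def NestingPattern (L : Set (List α)) (u x z y v : List α) : Prop :=
  x ≠ [] ∧ y ≠ [] ∧
    (∀ k, 1 ≤ k → u ++ lpow x k ++ z ++ lpow y k ++ v ∈ L) ∧
    (∀ k j, k ≠ j → u ++ lpow x k ++ z ++ lpow y j ++ v ∉ L)

/-- `x` contains an occurrence of a call symbol with no matching return inside `x`. -/
def UnmatchedCallIn (t : α → Kind) (x : List α) : Prop :=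
  ∃ x1 a x2, x = x1 ++ a :: x2 ∧ t a = Kind.call ∧
    ¬ ∃ w b w', x2 = w ++ b :: w' ∧ t b = Kind.ret ∧ WellMatched t w

/-- `y` contains an occurrence of a return symbol with no matching call inside `y`. -/
def UnmatchedRetIn (t : α → Kind) (y : List α) : Prop :=
  ∃ y1 b y2, y = y1 ++ b :: y2 ∧ t b = Kind.ret ∧
    ¬ ∃ w a w', y1 = w ++ a :: w' ∧ t a = Kind.call ∧ WellMatched t w'

/-- A tagging is compatible with a nesting pattern `(x, y)`. -/
def PatternCompatible (t : α → Kind) (x y : List α) : Prop :=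
  UnmatchedCallIn t x ∧ UnmatchedRetIn t y

/-- Compatibility of a tagging with a set `S` of seed strings (patterns w.r.t. `L`). -/
def CompatibleWith (t : α → Kind) (L S : Set (List α)) : Prop :=
  (∀ s ∈ S, WellMatched t s) ∧
  ∀ u x z y v, (u ++ x ++ z ++ y ++ v) ∈ S → NestingPattern L u x z y v →
    PatternCompatible t x y

/-- Compatibility of a tagging with the whole language. -/
def Compatible (t : α → Kind) (L : Set (List α)) : Prop := CompatibleWith t L L

/-- Syntactic congruence with respect to `L`. -/
def SynCongr (L : Set (List α)) (s1 s2 : List α) : Prop :=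
  ∀ u v, u ++ s1 ++ v ∈ L ↔ u ++ s2 ++ v ∈ L

end VStar

namespace VStar

/-- Context derivations: `DCtx G L₁ p L₂ q` means `L₁ →* p L₂ q`. -/
inductive VPG.DCtx {α N : Type} {t : α → Kind} (G : VPG α N t) :
    N → List α → N → List α → Prop
  | refl {L} : G.DCtx L [] L []
  | plain {L c L1 L2 p q} : G.pplain L c L1 → G.DCtx L1 p L2 q →
      G.DCtx L (c :: p) L2 q
  | nestL {L a A b B L2 p q s} : G.pmatch L a A b B → G.DCtx A p L2 q →
      G.Derives B s → G.DCtx L (a :: p) L2 (q ++ b :: s)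
  | nestR {L a A b B L2 p q s} : G.pmatch L a A b B → G.Derives A s →
      G.DCtx B p L2 q → G.DCtx L (a :: s ++ b :: p) L2 q

end VStar

namespace VStar

theorem VPG.Derives.wellMatched {α N : Type} {t : α → Kind} {G : VPG α N t}
    {L : N} {s : List α} (h : G.Derives L s) : WellMatched t s := by
  induction h with
  | eps _ => exact WellMatched.nil
  | plain hp _ ih => exact WellMatched.plain (G.plain_ok hp) ih
  | nest hm _ _ ih1 ih2 =>
      exact WellMatched.nest (G.match_ok hm).1 (G.match_ok hm).2 ih1 ih2

theorem VPG.DCtx.derives {α N : Type} {t : α → Kind} {G : VPG α N t}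
    {L L2 : N} {p q : List α} (h : G.DCtx L p L2 q) {w : List α}
    (hw : G.Derives L2 w) : G.Derives L (p ++ w ++ q) := by
  induction h with
  | refl => simpa using hw
  | plain hp _ ih => exact VPG.Derives.plain hp (ih hw)
  | nestL hm _ hb ih =>
      have := VPG.Derives.nest hm (ih hw) hb
      simpa using this
  | nestR hm ha _ ih =>
      have := VPG.Derives.nest hm ha (ih hw)
      simpa using this

theorem dctx_main {α N : Type} {t : α → Kind} {G : VPG α N t}
    {L L2 : N} {s1 s2 : List α} (hctx : G.DCtx L s1 L2 s2) (hs2 : s2 ≠ []) :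
    ∃ (L1 A B : N) (a b : α), G.pmatch L1 a A b B ∧
      ∃ s1' s1'' s2'' s2', s1 = s1' ++ a :: s1'' ∧ s2 = s2'' ++ b :: s2' ∧
        t a = Kind.call ∧ t b = Kind.ret ∧
        ∀ w, G.Derives L2 w → WellMatched t (s1'' ++ w ++ s2'') := by
  induction hctx with
  | refl => exact absurd rfl hs2
  | @plain L c M L2 p q hp hd ih =>
      obtain ⟨L1, A, B, a, b, hm, s1', s1'', s2'', s2', hp1, hp2, hta, htb, hwm⟩ :=
        ih hs2
      exact ⟨L1, A, B, a, b, hm, c :: s1', s1'', s2'', s2',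
        by simp [hp1], hp2, hta, htb, hwm⟩
  | @nestL L a A b B L2 p q s hm hd hb ih =>
      by_cases hq : q = []
      · subst hq
        refine ⟨L, A, B, a, b, hm, [], p, [], s, rfl, rfl,
          (G.match_ok hm).1, (G.match_ok hm).2, ?_⟩
        intro w hw
        have := (hd.derives hw).wellMatched
        simpa using this
      · obtain ⟨L1, A', B', a', b', hm', s1', s1'', s2'', s2', hp1, hp2, hta, htb, hwm⟩ :=
          ih hq
        refine ⟨L1, A', B', a', b', hm', a :: s1', s1'', s2'', s2' ++ b :: s,
          by simp [hp1], by simp [hp2], hta, htb, hwm⟩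
  | @nestR L a A b B L2 p q s hm ha hd ih =>
      obtain ⟨L1, A', B', a', b', hm', s1', s1'', s2'', s2', hp1, hp2, hta, htb, hwm⟩ :=
        ih hs2
      refine ⟨L1, A', B', a', b', hm', a :: s ++ b :: s1', s1'', s2'', s2',
        by simp [hp1], hp2, hta, htb, hwm⟩

end VStar

open VStar in
/-- a recursive derivation `L →* s1 L s2` with `s2 ≠ ε` must use
a matching rule, yielding a matched call in `s1` and return in `s2` straddling
the recursive occurrence of `L`. -/
theorem recursion_with_nonempty_right_uses_matching_rule {α N : Type}
    {t : α → Kind} (G : VPG α N t) (L : N) (s1 s2 : List α)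
    (hctx : G.DCtx L s1 L s2) (hs2 : s2 ≠ []) :
    ∃ (L1 A B : N) (a b : α), G.pmatch L1 a A b B ∧
      ∃ s1' s1'' s2'' s2', s1 = s1' ++ a :: s1'' ∧ s2 = s2'' ++ b :: s2' ∧
        t a = Kind.call ∧ t b = Kind.ret ∧
        ∀ w, G.Derives L w → WellMatched t (s1'' ++ w ++ s2'') := by
  exact VStar.dctx_main hctx hs2
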